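/- arXiv:2508.15675 — 2 statements merged into one kernel-verified Lean document; each statement's English description precedes it below -/
import Mathlib

section
/- Let A ∈ ℝ^{r×r} with ‖A‖_op ≤ 1 − c for some c ∈ (0,1), and let matrices R_t ∈ ℝ^{r×r} satisfy R_0 = 0 and R_t = D_t + A R_{t−1} Aᵀ for t = 1,…,T. Setting S_T = Σ_{t=1}^T R_t and W_k = Σ_{t=1}^k D_t, one has the identity S_T = Σ_{k=1}^T A^{T−k} W_k (Aᵀ)^{T−k}, and consequently ‖S_T‖_op ≤ (1 − ‖A‖_op²)^{−1} max_{k∈[T]} ‖W_k‖_op. -/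
open Matrix

/-- The ℓ₂ → ℓ₂ operator (spectral) norm of a real matrix. -/
noncomputable def opNorm {m n : Type*} [Fintype m] [Fintype n] [DecidableEq n]
    (A : Matrix m n ℝ) : ℝ :=
  ‖LinearMap.toContinuousLinearMap (Matrix.toEuclideanLin A)‖

/-!
The partial sums `S n = ∑_{t ≤ n} R t` obey the same recursion as `R`, with `D` replaced by
`W n = ∑_{t ≤ n} D t`: `S (n + 1) = W (n + 1) + A * S n * Aᵀ`. Unrolling it gives the identity, and
bounding the `k`-th term by `‖A‖ ^ (2 (T - k)) * max ‖W‖` leaves a geometric series in `‖A‖ ^ 2`.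
-/

open Finset

theorem sum_Icc_sub_one_eq {M : Type*} [AddCommMonoid M] {f : ℕ → M} (h0 : f 0 = 0) (n : ℕ) :
    ∑ t ∈ Icc 1 (n + 1), f (t - 1) = ∑ t ∈ Icc 1 n, f t := by
  induction n with
  | zero => simp [h0]
  | succ n ih =>
    rw [sum_Icc_succ_top (by omega), ih, sum_Icc_succ_top (by omega), Nat.add_sub_cancel]

section Semiring

variable {α : Type*} [Semiring α]

theorem sum_Icc_succ_eq_of_rec {R D : ℕ → α} {a b : α} (h0 : R 0 = 0) {n : ℕ}
    (hrec : ∀ t ∈ Icc 1 (n + 1), R t = D t + a * R (t - 1) * b) :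
    ∑ t ∈ Icc 1 (n + 1), R t = ∑ t ∈ Icc 1 (n + 1), D t + a * (∑ t ∈ Icc 1 n, R t) * b := by
  rw [sum_congr rfl hrec, sum_add_distrib, ← sum_Icc_sub_one_eq h0, mul_sum, sum_mul]

theorem eq_sum_Icc_pow_mul_mul_pow_of_rec {S W : ℕ → α} {a b : α} {N : ℕ} (h0 : S 0 = 0)
    (hrec : ∀ n < N, S (n + 1) = W (n + 1) + a * S n * b) :
    ∀ n ≤ N, S n = ∑ k ∈ Icc 1 n, a ^ (n - k) * W k * b ^ (n - k) := by
  intro n hn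
  induction n with
  | zero => simp [h0]
  | succ n ih =>
    rw [hrec n hn, ih (by omega), sum_Icc_succ_top (by omega), Nat.sub_self, pow_zero, pow_zero,
      one_mul, mul_one, add_comm, mul_sum, sum_mul]
    congr 1
    refine sum_congr rfl fun k hk => ?_
    rw [mem_Icc] at hk
    rw [show n + 1 - k = n - k + 1 by omega, pow_succ', pow_succ]
    simp only [mul_assoc]

end Semiring

theorem sum_Icc_pow_sub_le {q : ℝ} (hq0 : 0 ≤ q) (hq1 : q < 1) (n : ℕ) :
    ∑ k ∈ Icc 1 n, q ^ (n - k) ≤ (1 - q)⁻¹ := by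
  rw [← Ico_add_one_right_eq_Icc, sum_Ico_reflect _ _ le_rfl, Nat.add_sub_cancel, Nat.sub_self]
  simpa using geom_sum_Ico_le_of_lt_one (m := 0) (n := n) hq0 hq1

section SeminormedRing

variable {α : Type*} [SeminormedRing α]

theorem norm_pow_mul_mul_pow_le (a b x : α) (m : ℕ) :
    ‖a ^ m * x * b ^ m‖ ≤ (‖a‖ * ‖b‖) ^ m * ‖x‖ := by
  rcases m.eq_zero_or_pos with rfl | hm
  · simp
  calc ‖a ^ m * x * b ^ m‖ ≤ ‖a ^ m‖ * ‖x‖ * ‖b ^ m‖ := norm_mul₃_le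
    _ ≤ ‖a‖ ^ m * ‖x‖ * ‖b‖ ^ m := by gcongr <;> exact norm_pow_le' _ hm
    _ = (‖a‖ * ‖b‖) ^ m * ‖x‖ := by ring

theorem norm_sum_Icc_pow_mul_mul_pow_le {a b : α} (hab : ‖a‖ * ‖b‖ < 1) (W : ℕ → α) {n : ℕ}
    (hn : (Icc 1 n).Nonempty) :
    ‖∑ k ∈ Icc 1 n, a ^ (n - k) * W k * b ^ (n - k)‖ ≤
      (1 - ‖a‖ * ‖b‖)⁻¹ * (Icc 1 n).sup' hn (fun k => ‖W k‖) := by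
  set M := (Icc 1 n).sup' hn (fun k => ‖W k‖)
  obtain ⟨k₀, hk₀⟩ := hn
  have hM : 0 ≤ M := (norm_nonneg (W k₀)).trans (le_sup' (fun k => ‖W k‖) hk₀)
  calc ‖∑ k ∈ Icc 1 n, a ^ (n - k) * W k * b ^ (n - k)‖
      ≤ ∑ k ∈ Icc 1 n, (‖a‖ * ‖b‖) ^ (n - k) * M := by
        refine (norm_sum_le _ _).trans (sum_le_sum fun k hk => ?_)
        exact (norm_pow_mul_mul_pow_le _ _ _ _).trans
          (by gcongr; exact le_sup' (fun k => ‖W k‖) hk)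
    _ = (∑ k ∈ Icc 1 n, (‖a‖ * ‖b‖) ^ (n - k)) * M := by rw [sum_mul]
    _ ≤ (1 - ‖a‖ * ‖b‖)⁻¹ * M := by gcongr; exact sum_Icc_pow_sub_le (by positivity) hab n

end SeminormedRing

open scoped Matrix.Norms.L2Operator

theorem Matrix.l2_opNorm_transpose {m n : Type*} [Fintype m] [Fintype n] [DecidableEq m]
    [DecidableEq n] (A : Matrix m n ℝ) :
    ‖Aᵀ‖ = ‖A‖ := by
  rw [← conjTranspose_eq_transpose_of_trivial, l2_opNorm_conjTranspose]

theorem telescoping_recursion_bound_general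
    (r T : ℕ) (hT : 1 ≤ T) (c : ℝ) (hc0 : 0 < c)
    (A : Matrix (Fin r) (Fin r) ℝ) (hA : opNorm A ≤ 1 - c)
    (D R : ℕ → Matrix (Fin r) (Fin r) ℝ)
    (hR0 : R 0 = 0)
    (hrec : ∀ t, 1 ≤ t → t ≤ T → R t = D t + A * R (t - 1) * Aᵀ) :
    (∑ t ∈ Finset.Icc 1 T, R t) =
        ∑ k ∈ Finset.Icc 1 T, A ^ (T - k) * (∑ s ∈ Finset.Icc 1 k, D s) * (Aᵀ) ^ (T - k) ∧
      opNorm (∑ t ∈ Finset.Icc 1 T, R t) ≤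
        (1 - (opNorm A) ^ 2)⁻¹ *
          (Finset.Icc 1 T).sup' (Finset.nonempty_Icc.mpr hT)
            (fun k => opNorm (∑ s ∈ Finset.Icc 1 k, D s)) := by
  have hsum : (∑ t ∈ Icc 1 T, R t) =
      ∑ k ∈ Icc 1 T, A ^ (T - k) * (∑ s ∈ Icc 1 k, D s) * Aᵀ ^ (T - k) :=
    eq_sum_Icc_pow_mul_mul_pow_of_rec (S := fun n => ∑ t ∈ Icc 1 n, R t) (by simp)
      (fun n hn => sum_Icc_succ_eq_of_rec hR0 fun t ht =>
        hrec t (mem_Icc.1 ht).1 ((mem_Icc.1 ht).2.trans hn)) T le_rfl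
  have hA1 : ‖A‖ * ‖Aᵀ‖ < 1 := by
    rw [Matrix.l2_opNorm_transpose, ← sq]
    have hA' : ‖A‖ ≤ 1 - c := hA
    nlinarith [norm_nonneg A]
  refine ⟨hsum, ?_⟩
  have := norm_sum_Icc_pow_mul_mul_pow_le hA1 (fun k => ∑ s ∈ Icc 1 k, D s) (nonempty_Icc.mpr hT)
  rwa [← hsum, Matrix.l2_opNorm_transpose, ← sq] at this

/-- if `‖A‖_op ≤ 1 − c`, `R_0 = 0` and `R_t = D_t + A R_{t−1} Aᵀ` for
`t = 1,…,T`, then `S_T := ∑_{t=1}^T R_t = ∑_{k=1}^T A^{T−k} W_k (Aᵀ)^{T−k}` with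
`W_k := ∑_{t=1}^k D_t`, and `‖S_T‖_op ≤ (1 − ‖A‖_op²)⁻¹ max_{k ∈ [T]} ‖W_k‖_op`. -/
theorem telescoping_recursion_bound
    (r T : ℕ) (hT : 1 ≤ T) (c : ℝ) (hc0 : 0 < c) (hc1 : c < 1)
    (A : Matrix (Fin r) (Fin r) ℝ) (hA : opNorm A ≤ 1 - c)
    (D R : ℕ → Matrix (Fin r) (Fin r) ℝ)
    (hR0 : R 0 = 0)
    (hrec : ∀ t, 1 ≤ t → t ≤ T → R t = D t + A * R (t - 1) * Aᵀ) :
    (∑ t ∈ Finset.Icc 1 T, R t) =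
        ∑ k ∈ Finset.Icc 1 T, A ^ (T - k) * (∑ s ∈ Finset.Icc 1 k, D s) * (Aᵀ) ^ (T - k) ∧
      opNorm (∑ t ∈ Finset.Icc 1 T, R t) ≤
        (1 - (opNorm A) ^ 2)⁻¹ *
          (Finset.Icc 1 T).sup' (Finset.nonempty_Icc.mpr hT)
            (fun k => opNorm (∑ s ∈ Finset.Icc 1 k, D s)) :=
  telescoping_recursion_bound_general r T hT c hc0 A hA D R hR0 hrec
end

section
/- Let g_1,…,g_r : [0,1] → ℝ satisfy ∫₀¹ g_k g_l = δ_{kl}, each g_k ∈ C¹([0,1]), and max_k (‖g_k‖_∞ ∨ ‖g_k′‖_∞) ≤ C_g. Define F ∈ ℝ^{T×r} by F_{t,k} = g_k(t/T), and let Q ∈ ℝ^{T×T} with Q_{ts} = 1 if 1 ≤ |t−s| ≤ B and 0 otherwise, for a bandwidth 1 ≤ B ≤ T. Then there exists an absolute constant C > 0 such that ‖Fᵀ Q F − 2BT I_r‖_op ≤ C C_g² B² r. -/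
/-!
On the grid `xₜ = (t + 1)/T`, entry `(k, l)` of `Fᵀ Q F` is
`∑ₜ g_k(xₜ) ∑_{1 ≤ |s - t| ≤ B} g_l(xₛ)`. Three replacements turn it into `2BT δ_{kl}`,
each costing `O(C_g² B²)`:
* `g_l(xₛ) ↦ g_l(xₜ)`: by the mean value theorem each of the `≤ 2BT` terms moves by
  `≤ C_g · C_g B / T`, in total `2 C_g² B²`;
* row sums of `Q` ↦ `2B`: they differ only in the `≤ 2B` rows within `B` of the boundary,
  by at most `2B` each, in total `4 C_g² B²`;
* `∑ₜ g_k g_l(xₜ) ↦ T ∫₀¹ g_k g_l = T δ_{kl}`: a right Riemann sum of a `2 C_g²`-Lipschitz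
  function is off by at most `2 C_g²`, and this is multiplied by `2B`.
Hence every entry of `Fᵀ Q F - 2BT I_r` is at most `10 C_g² B²`, and the spectral norm of an
`r × r` matrix is at most its Frobenius norm, hence at most `r` times its largest entry.
-/

open Matrix

/-- The `T × r` grid-evaluation matrix `F_{t,k} = g_k(t/T)` (with `t = 1,…,T`). -/
noncomputable def gridMat (r T : ℕ) (g : Fin r → ℝ → ℝ) : Matrix (Fin T) (Fin r) ℝ :=
  Matrix.of fun t k => g k (((t.val : ℝ) + 1) / (T : ℝ))

/-- The 0/1 band matrix of bandwidth `B`: `Q_{ts} = 1` if `1 ≤ |t−s| ≤ B`, else `0`. -/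
noncomputable def bandQ (T B : ℕ) : Matrix (Fin T) (Fin T) ℝ :=
  Matrix.of fun t s =>
    if 1 ≤ |(t.val : ℤ) - (s.val : ℤ)| ∧ |(t.val : ℤ) - (s.val : ℤ)| ≤ (B : ℤ)
    then (1 : ℝ) else 0

open Finset

lemma abs_sub_le_mul_of_abs_deriv_le {D : Set ℝ} (hD : Convex ℝ D) {f : ℝ → ℝ}
    (hf : ContinuousOn f D) (hf' : DifferentiableOn ℝ f (interior D)) {C : ℝ}
    (hC : ∀ x ∈ interior D, |deriv f x| ≤ C) {x y : ℝ} (hx : x ∈ D) (hy : y ∈ D) :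
    |f y - f x| ≤ C * |y - x| := by
  wlog hxy : x ≤ y generalizing x y
  · rw [abs_sub_comm, abs_sub_comm y]
    exact this hy hx (le_of_not_ge hxy)
  rw [abs_of_nonneg (sub_nonneg.2 hxy), abs_le]
  constructor
  · have := hD.mul_sub_le_image_sub_of_le_deriv hf hf' (fun z hz => (abs_le.1 (hC z hz)).1)
      x hx y hy hxy
    linarith
  · exact hD.image_sub_le_mul_sub_of_deriv_le hf hf' (fun z hz => (abs_le.1 (hC z hz)).2)
      x hx y hy hxy

lemma abs_sub_le_of_contDiffOn_Icc {f : ℝ → ℝ} {a b C : ℝ} (hf : ContDiffOn ℝ 1 f (Set.Icc a b))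
    (hC : ∀ u ∈ Set.Icc a b, |deriv f u| ≤ C) {x y : ℝ} (hx : x ∈ Set.Icc a b)
    (hy : y ∈ Set.Icc a b) : |f y - f x| ≤ C * |y - x| :=
  abs_sub_le_mul_of_abs_deriv_le (convex_Icc a b) hf.continuousOn
    ((hf.differentiableOn one_ne_zero).mono interior_subset)
    (fun u hu => hC u (interior_subset hu)) hx hy

lemma lipschitzOnWith_mul_of_abs_le {f h : ℝ → ℝ} {s : Set ℝ} {C : ℝ}
    (hf : ∀ x ∈ s, |f x| ≤ C) (hh : ∀ x ∈ s, |h x| ≤ C)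
    (hf' : ∀ x ∈ s, ∀ y ∈ s, |f y - f x| ≤ C * |y - x|)
    (hh' : ∀ x ∈ s, ∀ y ∈ s, |h y - h x| ≤ C * |y - x|) :
    LipschitzOnWith (2 * C ^ 2).toNNReal (fun u => f u * h u) s := by
  refine LipschitzOnWith.of_dist_le_mul fun y hy x hx => ?_
  have hC : 0 ≤ C := (abs_nonneg _).trans (hf x hx)
  rw [Real.coe_toNNReal _ (by positivity), Real.dist_eq, Real.dist_eq,
    show f y * h y - f x * h x = f y * (h y - h x) + h x * (f y - f x) by ring]
  refine (abs_add_le _ _).trans ?_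
  rw [abs_mul, abs_mul]
  nlinarith [mul_le_mul (hf y hy) (hh' x hx y hy) (abs_nonneg _) hC,
    mul_le_mul (hh x hx) (hf' x hx y hy) (abs_nonneg _) hC]

lemma abs_mul_sub_integral_le {f : ℝ → ℝ} {a b M : ℝ} (hab : a ≤ b)
    (hf : IntervalIntegrable f MeasureTheory.volume a b)
    (hM : ∀ x ∈ Set.Ioc a b, |f b - f x| ≤ M) :
    |(b - a) * f b - ∫ x in a..b, f x| ≤ M * (b - a) := by
  have h := intervalIntegral.norm_integral_le_of_norm_le_const (C := M) (a := a) (b := b)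
    (f := fun x => f b - f x) (by rwa [Set.uIoc_of_le hab])
  rwa [intervalIntegral.integral_sub intervalIntegrable_const hf, intervalIntegral.integral_const,
    smul_eq_mul, abs_of_nonneg (sub_nonneg.2 hab)] at h

lemma abs_sum_right_riemann_sub_integral_le {f : ℝ → ℝ} {L : NNReal} {x : ℕ → ℝ}
    {n : ℕ}
    (hx : Monotone x) (hf : LipschitzOnWith L f (Set.Icc (x 0) (x n))) :
    |∑ i ∈ range n, (x (i + 1) - x i) * f (x (i + 1)) - ∫ u in x 0..x n, f u|
      ≤ L * ∑ i ∈ range n, (x (i + 1) - x i) ^ 2 := by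
  have hsub : ∀ i < n, Set.Icc (x i) (x (i + 1)) ⊆ Set.Icc (x 0) (x n) := fun i hi =>
    Set.Icc_subset_Icc (hx (Nat.zero_le i)) (hx hi)
  have hint : ∀ i < n, IntervalIntegrable f MeasureTheory.volume (x i) (x (i + 1)) :=
    fun i hi => (hf.continuousOn.mono (hsub i hi)).intervalIntegrable_of_Icc (hx i.le_succ)
  rw [← intervalIntegral.sum_integral_adjacent_intervals hint, ← sum_sub_distrib, mul_sum]
  refine (abs_sum_le_sum_abs _ _).trans (sum_le_sum fun i hi => ?_)
  have hi := mem_range.1 hi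
  rw [sq, ← mul_assoc]
  refine abs_mul_sub_integral_le (hx i.le_succ) (hint i hi) fun u hu => ?_
  have hu' : u ∈ Set.Icc (x i) (x (i + 1)) := Set.Ioc_subset_Icc_self hu
  calc |f (x (i + 1)) - f u| ≤ L * |x (i + 1) - u| := by
        simpa only [Real.dist_eq] using
          hf.dist_le_mul _ (hsub i hi (Set.right_mem_Icc.2 (hx i.le_succ))) _ (hsub i hi hu')
    _ ≤ L * (x (i + 1) - x i) := by
        gcongr
        rw [abs_of_nonneg (sub_nonneg.2 hu'.2)]
        linarith [hu.1]

lemma abs_sum_uniform_riemann_sub_integral_le {f : ℝ → ℝ} {L : NNReal} (T : ℕ)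
    (hf : LipschitzOnWith L f (Set.Icc 0 1)) :
    |∑ i ∈ range T, f ((i + 1) / T) - T * ∫ u in (0 : ℝ)..1, f u| ≤ L := by
  rcases T.eq_zero_or_pos with rfl | hT
  · simp
  have hT' : (T : ℝ) ≠ 0 := Nat.cast_ne_zero.2 hT.ne'
  have hx : Monotone fun i : ℕ => (i : ℝ) / T := fun i j hij =>
    div_le_div_of_nonneg_right (Nat.cast_le.2 hij) (Nat.cast_nonneg T)
  have h := abs_sum_right_riemann_sub_integral_le (n := T) hx (by simpa [hT'] using hf)
  simp only [Nat.cast_zero, zero_div, div_self hT', Nat.cast_add, Nat.cast_one] at h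
  have hcell : ∀ i : ℕ, ((i : ℝ) + 1) / T - i / T = 1 / T := fun i => by ring
  simp only [hcell, sum_const, card_range, nsmul_eq_mul] at h
  calc _ = T * |∑ i ∈ range T, 1 / T * f ((i + 1) / T) - ∫ u in (0 : ℝ)..1, f u| := by
        rw [← abs_of_pos (Nat.cast_pos.2 hT : (0 : ℝ) < T), ← abs_mul, mul_sub, mul_sum]
        simp [hT']
    _ ≤ T * (L * (T * (1 / T) ^ 2)) := by gcongr
    _ = L := by field_simp

lemma opNorm_le_sqrt_sum_sq {m n : Type*} [Fintype m] [Fintype n] [DecidableEq n]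
    (A : Matrix m n ℝ) : opNorm A ≤ √(∑ i, ∑ j, A i j ^ 2) := by
  refine ContinuousLinearMap.opNorm_le_bound _ (Real.sqrt_nonneg _) fun x => ?_
  rw [LinearMap.coe_toContinuousLinearMap', EuclideanSpace.norm_eq, EuclideanSpace.norm_eq,
    ← Real.sqrt_mul (by positivity), sum_mul]
  refine Real.sqrt_le_sqrt (sum_le_sum fun i _ => ?_)
  simpa [Real.norm_eq_abs, sq_abs, Matrix.toLpLin_apply, mulVec, dotProduct] using
    sum_mul_sq_le_sq_mul_sq univ (A i) (fun j => x j)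

lemma opNorm_le_card_mul_of_abs_le {ι : Type*} [Fintype ι] [DecidableEq ι] (A : Matrix ι ι ℝ)
    {M : ℝ} (hM : 0 ≤ M) (hA : ∀ i j, |A i j| ≤ M) : opNorm A ≤ Fintype.card ι * M := by
  refine (opNorm_le_sqrt_sum_sq A).trans (Real.sqrt_le_iff.2 ⟨by positivity, ?_⟩)
  calc ∑ i, ∑ j, A i j ^ 2 ≤ ∑ i : ι, ∑ j : ι, M ^ 2 :=
        sum_le_sum fun i _ => sum_le_sum fun j _ =>
          sq_le_sq' (abs_le.1 (hA i j)).1 (abs_le.1 (hA i j)).2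
    _ = (Fintype.card ι * M) ^ 2 := by
        simp only [sum_const, card_univ, nsmul_eq_mul]
        ring

lemma transpose_mul_mul_apply {m n : Type*} [Fintype m] (A : Matrix m n ℝ) (Q : Matrix m m ℝ)
    (k l : n) : (Aᵀ * Q * A) k l = ∑ t, A t k * ∑ s, Q t s * A s l := by
  simp only [mul_apply, transpose_apply, sum_mul, mul_sum, mul_assoc]
  exact sum_comm

lemma bandQ_nonneg (T B : ℕ) (t s : Fin T) : 0 ≤ bandQ T B t s := by
  simp only [bandQ, of_apply]
  split_ifs <;> norm_num

lemma sum_bandQ_row (T B : ℕ) (t : Fin T) :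
    ∑ s, bandQ T B t s = #((Icc (t - B : ℕ) (t + B) ∩ range T).erase t) := by
  simp only [bandQ, of_apply]
  rw [Fin.sum_univ_eq_sum_range
    (fun s => if 1 ≤ |(t : ℤ) - s| ∧ |(t : ℤ) - s| ≤ B then (1 : ℝ) else 0), sum_boole]
  congr 2
  ext s
  simp only [mem_filter, mem_range, mem_erase, mem_inter, mem_Icc, abs_le, le_abs]
  omega

lemma sum_bandQ_row_le (T B : ℕ) (t : Fin T) : ∑ s, bandQ T B t s ≤ 2 * B := by
  rw [sum_bandQ_row]
  have : #((Icc (t - B : ℕ) (t + B) ∩ range T).erase t) ≤ 2 * B := by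
    rw [card_erase_of_mem (by simp)]
    have := card_le_card (inter_subset_left (s₁ := Icc (t - B : ℕ) (t + B)) (s₂ := range T))
    rw [Nat.card_Icc] at this
    omega
  exact_mod_cast this

lemma sum_bandQ_row_eq {T B : ℕ} (t : Fin T) (hlo : B ≤ t) (hhi : t + B < T) :
    ∑ s, bandQ T B t s = 2 * B := by
  have hIcc : Icc (t - B : ℕ) (t + B) ⊆ range T := fun s hs => by
    simp only [mem_Icc, mem_range] at hs ⊢
    omega
  rw [sum_bandQ_row, inter_eq_left.2 hIcc, card_erase_of_mem (by simp), Nat.card_Icc]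
  exact_mod_cast (by omega : t + B + 1 - (t - B) - 1 = 2 * B)

lemma sum_abs_sum_bandQ_row_sub_le (T B : ℕ) :
    ∑ t, |∑ s, bandQ T B t s - 2 * B| ≤ 4 * B ^ 2 := by
  set edge := ({t : Fin T | t < B ∨ T ≤ t + B} : Finset (Fin T))
  have hedge : #edge ≤ 2 * B := by
    have := card_le_card_of_injOn (s := edge) (t := range B ∪ Ico (T - B) T) Fin.val
      (fun t ht => by
        simp only [edge, coe_filter, mem_univ, true_and, Set.mem_ofPred_eq, coe_union, coe_range,
          coe_Ico, Set.mem_union, Set.mem_Iio, Set.mem_Ico, Fin.is_lt, and_true] at ht ⊢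
        omega) Fin.val_injective.injOn
    have := card_union_le (range B) (Ico (T - B) T)
    simp only [card_range, Nat.card_Ico] at this
    omega
  calc ∑ t, |∑ s, bandQ T B t s - 2 * B|
      ≤ ∑ t, if t ∈ edge then (2 * B : ℝ) else 0 := by
        refine sum_le_sum fun t _ => ?_
        split_ifs with ht
        · have := sum_bandQ_row_le T B t
          have := sum_nonneg fun s (_ : s ∈ univ) => bandQ_nonneg T B t s
          rw [abs_le]; constructor <;> linarith
        · simp only [edge, mem_filter, mem_univ, true_and, not_or, not_lt] at ht
          rw [sum_bandQ_row_eq t ht.1 (by omega), sub_self, abs_zero]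
    _ = #edge * (2 * B) := by rw [sum_ite_mem, univ_inter, sum_const, nsmul_eq_mul]
    _ ≤ 2 * B * (2 * B) := by gcongr; exact_mod_cast hedge
    _ = 4 * B ^ 2 := by ring

section BandForm

variable {T B : ℕ} {a b : Fin T → ℝ} {c : ℝ}

lemma abs_sum_bandQ_mul_sub_rowSum_le {α : ℝ} (ha : ∀ t, |a t| ≤ c)
    (hb : ∀ t s : Fin T, |(t.val : ℤ) - s.val| ≤ B → |b s - b t| ≤ α) :
    |∑ t, a t * ∑ s, bandQ T B t s * b s - ∑ t, a t * (∑ s, bandQ T B t s) * b t|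
      ≤ 2 * B * T * c * α := by
  have hterm : ∀ t s, |bandQ T B t s * (b s - b t)| ≤ bandQ T B t s * α := fun t s => by
    simp only [bandQ, of_apply]
    split_ifs with h
    · simpa using hb t s h.2
    · simp
  have hrow : ∀ t, |a t * ∑ s, bandQ T B t s * b s - a t * (∑ s, bandQ T B t s) * b t|
      ≤ c * (α * (2 * B)) := fun t => by
    have hα : 0 ≤ α := by simpa using (abs_nonneg _).trans (hb t t (by simp))
    have hsum : |∑ s, bandQ T B t s * (b s - b t)| ≤ α * (2 * B) :=
      calc |∑ s, bandQ T B t s * (b s - b t)| ≤ ∑ s, bandQ T B t s * α :=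
            (abs_sum_le_sum_abs _ _).trans (sum_le_sum fun s _ => hterm t s)
        _ = α * ∑ s, bandQ T B t s := by rw [← sum_mul, mul_comm]
        _ ≤ α * (2 * B) := by gcongr; exact sum_bandQ_row_le T B t
    rw [mul_assoc, sum_mul, ← mul_sub, ← sum_sub_distrib, abs_mul]
    simp only [← mul_sub]
    exact mul_le_mul (ha t) hsum (abs_nonneg _) ((abs_nonneg _).trans (ha t))
  calc _ ≤ ∑ t : Fin T, c * (α * (2 * B)) := by
        rw [← sum_sub_distrib]
        exact (abs_sum_le_sum_abs _ _).trans (sum_le_sum fun t _ => hrow t)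
    _ = 2 * B * T * c * α := by
        simp only [sum_const, card_univ, Fintype.card_fin, nsmul_eq_mul]
        ring

lemma abs_sum_rowSum_mul_sub_le (ha : ∀ t, |a t| ≤ c) (hb : ∀ t, |b t| ≤ c) :
    |∑ t, a t * (∑ s, bandQ T B t s) * b t - 2 * B * ∑ t, a t * b t|
      ≤ 4 * B ^ 2 * c ^ 2 := by
  have hab : ∀ t, |a t * b t| ≤ c ^ 2 := fun t => by
    rw [abs_mul, sq]
    exact mul_le_mul (ha t) (hb t) (abs_nonneg _) ((abs_nonneg _).trans (ha t))
  calc _ = |∑ t, (∑ s, bandQ T B t s - 2 * B) * (a t * b t)| := by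
        rw [mul_sum, ← sum_sub_distrib]
        congr 1
        exact sum_congr rfl fun t _ => by ring
    _ ≤ ∑ t, |∑ s, bandQ T B t s - 2 * B| * c ^ 2 := by
        refine (abs_sum_le_sum_abs _ _).trans (sum_le_sum fun t _ => ?_)
        rw [abs_mul]
        exact mul_le_mul_of_nonneg_left (hab t) (abs_nonneg _)
    _ ≤ 4 * B ^ 2 * c ^ 2 := by
        rw [← sum_mul]
        exact mul_le_mul_of_nonneg_right (sum_abs_sum_bandQ_row_sub_le T B) (sq_nonneg c)

end BandForm

lemma grid_mem_Icc {T : ℕ} (t : Fin T) : ((t : ℝ) + 1) / T ∈ Set.Icc (0 : ℝ) 1 :=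
  ⟨by positivity, div_le_one_of_le₀ (by exact_mod_cast t.isLt) (Nat.cast_nonneg T)⟩

lemma abs_grid_sub_grid_le {T B : ℕ} (t s : Fin T) (hts : |(t.val : ℤ) - s.val| ≤ B) :
    |((s : ℝ) + 1) / T - ((t : ℝ) + 1) / T| ≤ B / T := by
  rw [show ((s : ℝ) + 1) / T - ((t : ℝ) + 1) / T = -((t : ℝ) - s) / T by ring, abs_div,
    abs_neg, Nat.abs_cast]
  exact div_le_div_of_nonneg_right (by exact_mod_cast hts) (Nat.cast_nonneg T)

lemma abs_gridMat_band_gram_sub_apply_le {r T B : ℕ} {Cg : ℝ} {g : Fin r → ℝ → ℝ}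
    (hT : 0 < T) (hg : ∀ k, ContDiffOn ℝ 1 (g k) (Set.Icc 0 1))
    (horth : ∀ k l, ∫ u in (0 : ℝ)..1, g k u * g l u = if k = l then 1 else 0)
    (hbound : ∀ k, ∀ u ∈ Set.Icc (0 : ℝ) 1, |g k u| ≤ Cg ∧ |deriv (g k) u| ≤ Cg)
    (k l : Fin r) :
    |((gridMat r T g)ᵀ * bandQ T B * gridMat r T g -
        (2 * (B : ℝ) * T) • (1 : Matrix (Fin r) (Fin r) ℝ)) k l| ≤ 10 * Cg ^ 2 * B ^ 2 := by
  set F := gridMat r T g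
  have hT' : (0 : ℝ) < T := Nat.cast_pos.2 hT
  have hCg : 0 ≤ Cg := (abs_nonneg _).trans (hbound k 0 (by simp)).1
  have hlip : ∀ m, ∀ x ∈ Set.Icc (0 : ℝ) 1, ∀ y ∈ Set.Icc (0 : ℝ) 1,
      |g m y - g m x| ≤ Cg * |y - x| := fun m x hx y hy =>
    abs_sub_le_of_contDiffOn_Icc (hg m) (fun u hu => (hbound m u hu).2) hx hy
  have hF : ∀ t m, |F t m| ≤ Cg := fun t m => (hbound m _ (grid_mem_Icc t)).1
  have hF_band :
      ∀ t s : Fin T, |(t.val : ℤ) - s.val| ≤ B → |F s l - F t l| ≤ Cg * (B / T) :=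
    fun t s hts => (hlip l _ (grid_mem_Icc t) _ (grid_mem_Icc s)).trans
      (mul_le_mul_of_nonneg_left (abs_grid_sub_grid_le t s hts) hCg)
  have hprod_lip := lipschitzOnWith_mul_of_abs_le (fun u hu => (hbound k u hu).1)
    (fun u hu => (hbound l u hu).1) (hlip k) (hlip l)
  have hriemann : |∑ t, F t k * F t l - T * (if k = l then 1 else 0)| ≤ 2 * Cg ^ 2 := by
    have := abs_sum_uniform_riemann_sub_integral_le T hprod_lip
    rwa [horth, Real.coe_toNNReal _ (by positivity),
      ← Fin.sum_univ_eq_sum_range (fun i => g k ((i + 1) / T) * g l ((i + 1) / T))] at this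
  have hB : (B : ℝ) ≤ B ^ 2 := by exact_mod_cast Nat.le_self_pow two_ne_zero B
  have hdiag : |2 * B * ∑ t, F t k * F t l - 2 * B * (T * (if k = l then 1 else 0))|
      ≤ 2 * B * (2 * Cg ^ 2) := by
    rw [← mul_sub, abs_mul, abs_of_nonneg (by positivity)]
    gcongr
  rw [Matrix.sub_apply, transpose_mul_mul_apply, Matrix.smul_apply, one_apply, smul_eq_mul,
    show 2 * (B : ℝ) * T * (if k = l then 1 else 0) = 2 * B * (T * (if k = l then 1 else 0))
    by ring]
  set R := ∑ t, F t k * (∑ s, bandQ T B t s) * F t l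
  calc _ ≤ 2 * B * T * Cg * (Cg * (B / T)) + (4 * B ^ 2 * Cg ^ 2 + 2 * B * (2 * Cg ^ 2)) :=
        (abs_sub_le _ R _).trans <|
          add_le_add (abs_sum_bandQ_mul_sub_rowSum_le (hF · k) hF_band) <|
          (abs_sub_le _ _ _).trans <|
          add_le_add (abs_sum_rowSum_mul_sub_le (hF · k) (hF · l)) hdiag
    _ ≤ 10 * Cg ^ 2 * B ^ 2 := by
        field_simp
        nlinarith [mul_le_mul_of_nonneg_left hB (sq_nonneg Cg)]

/-- with `g_1,…,g_r` orthonormal in `L²[0,1]`, `C¹`, bounded together with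
their derivatives by `C_g`, `F_{t,k} = g_k(t/T)` and `Q` the 0/1 band matrix of bandwidth
`1 ≤ B ≤ T`, there is an absolute constant `C > 0` with
`‖Fᵀ Q F − 2BT I_r‖_op ≤ C C_g² B² r`. -/
theorem gridMat_band_gram_approx :
    ∃ C : ℝ, 0 < C ∧
      ∀ (r T B : ℕ) (Cg : ℝ) (g : Fin r → ℝ → ℝ),
        1 ≤ B → B ≤ T →
        (∀ k, ContDiffOn ℝ 1 (g k) (Set.Icc (0 : ℝ) 1)) →
        (∀ k l, (∫ u in (0 : ℝ)..1, g k u * g l u) = if k = l then (1 : ℝ) else 0) →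
        (∀ k, ∀ u ∈ Set.Icc (0 : ℝ) 1, |g k u| ≤ Cg ∧ |deriv (g k) u| ≤ Cg) →
        opNorm ((gridMat r T g)ᵀ * bandQ T B * gridMat r T g -
            (2 * (B : ℝ) * (T : ℝ)) • (1 : Matrix (Fin r) (Fin r) ℝ)) ≤
          C * Cg ^ 2 * (B : ℝ) ^ 2 * r := by
  refine ⟨10, by norm_num, fun r T B Cg g hB hBT hg horth hbound => ?_⟩
  calc _ ≤ Fintype.card (Fin r) * (10 * Cg ^ 2 * B ^ 2) :=
        opNorm_le_card_mul_of_abs_le _ (by positivity)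
          (abs_gridMat_band_gram_sub_apply_le (hB.trans hBT) hg horth hbound)
    _ = 10 * Cg ^ 2 * B ^ 2 * r := by rw [Fintype.card_fin]; ring
end
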